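/- Let k > 0 and h_t the one-dimensional Dunkl heat kernel, and let μ be the measure with density |x|^{2k} on ℝ. Then h_t(x, −x) ≍ μ(B(x,√t))^{-1} · t/(t + x²) uniformly in t > 0 and x ∈ ℝ, i.e., there exist constants c, C > 0 with c ≤ h_t(x,−x) · μ(B(x,√t)) · (t + x²)/t ≤ C for all t > 0, x ∈ ℝ. -/

import Mathlib

open Real MeasureTheory intervalIntegral

noncomputable def dunklE (k x y : ℝ) : ℝ :=
  (Real.Gamma (k + 1/2) / (Real.Gamma k * Real.Gamma (1/2))) *
    ∫ u in (-1:ℝ)..1, (1 - u) ^ (k - 1) * (1 + u) ^ k * Real.exp (x * y * u)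

/-- The one-dimensional Dunkl heat kernel. -/
noncomputable def heatH (k t x y : ℝ) : ℝ :=
  ((2:ℝ) ^ (2 * k + 1) * Real.Gamma (k + 1/2))⁻¹ * t ^ (-k - 1/2) *
    Real.exp (-(x ^ 2 + y ^ 2) / (4 * t)) *
    dunklE k (x / Real.sqrt (2 * t)) (y / Real.sqrt (2 * t))

/-- The measure `|x|^{2k} dx` on `ℝ`. -/
noncomputable def dunklMeasure1 (k : ℝ) : Measure ℝ :=
  volume.withDensity (fun x => ENNReal.ofReal (|x| ^ (2 * k)))

/-!
Write `s = x² / (2t)`. The Gaussian factor of `h_t(x, -x)` merges with the integral defining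
`E_k(z, -z)`, giving `h_t(x, -x) = K t^(-k-1/2) J(s)` with the Laplace-type integral
`J(s) = ∫_{-1}^{1} (1-u)^(k-1) (1+u)^k e^(-s(1+u)) du`. This integral concentrates at `u = -1`
and is comparable to `(1+s)^(-(k+1))`: from below, restrict to `1 + u ≤ 1/(1+s)`, where the
exponential is at least `e⁻¹`; from above, `w^k e^(-sw) ≤ (2k/s)^k e^(-sw/2)`. Moreover
`μ(B(x,r)) ≍ r (|x|+r)^(2k)`. With `σ = |x|/√t` every power of `t` cancels, and the product in
the theorem becomes, up to constants, `(1+σ)^(2k) (1+σ²/2)^(-(k+1)) (1+σ²)`, which lies between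
`1` and `2^(2k+1)`.
-/

lemma rpow_mul_exp_neg_le {k y : ℝ} (hk : 0 < k) (hy : 0 ≤ y) :
    y ^ k * exp (-y) ≤ k ^ k := by
  have h : (y / k) ^ k ≤ exp y :=
    calc (y / k) ^ k ≤ exp (y / k) ^ k := by gcongr; linarith [add_one_le_exp (y / k)]
      _ = exp y := by rw [← exp_mul, div_mul_cancel₀ _ hk.ne']
  rw [div_rpow hy hk.le, div_le_iff₀ (by positivity)] at h
  rw [exp_neg, ← div_eq_mul_inv, div_le_iff₀ (exp_pos y)]
  linarith

lemma rpow_mul_exp_neg_mul_le {k s w : ℝ} (hk : 0 < k) (hs : 0 < s) (hw : 0 ≤ w) :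
    w ^ k * exp (-(s * w)) ≤ (2 * k / s) ^ k * exp (-(s / 2 * w)) := by
  have hpow : w ^ k = (2 / s) ^ k * (s / 2 * w) ^ k := by
    rw [← mul_rpow (by positivity) (by positivity)]; field_simp
  have hexp : exp (-(s * w)) = exp (-(s / 2 * w)) * exp (-(s / 2 * w)) := by
    rw [← exp_add]; ring_nf
  calc w ^ k * exp (-(s * w))
      = (2 / s) ^ k * ((s / 2 * w) ^ k * exp (-(s / 2 * w))) * exp (-(s / 2 * w)) := by
        rw [hpow, hexp]; ring
    _ ≤ (2 / s) ^ k * k ^ k * exp (-(s / 2 * w)) := by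
        gcongr; exact rpow_mul_exp_neg_le hk (by positivity)
    _ = (2 * k / s) ^ k * exp (-(s / 2 * w)) := by
        rw [← mul_rpow (by positivity) hk.le]; ring_nf

lemma rpow_mem_Icc_of_one_le_of_le_two {b p : ℝ} (h1 : 1 ≤ b) (h2 : b ≤ 2) :
    b ^ p ∈ Set.Icc (min 1 (2 ^ p)) (max 1 (2 ^ p)) := by
  rcases le_total 0 p with hp | hp
  · exact ⟨min_le_of_left_le (one_le_rpow h1 hp),
      le_max_of_le_right (rpow_le_rpow (by linarith) h2 hp)⟩
  · exact ⟨min_le_of_right_le (rpow_le_rpow_of_nonpos (by linarith) h2 hp),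
      le_max_of_le_left (rpow_le_one_of_one_le_of_nonpos h1 hp)⟩

lemma le_mul_one_add_rpow_neg {f A B s p : ℝ} (hs : 0 ≤ s) (hp : 0 ≤ p) (hA : 0 ≤ A)
    (hB : 0 ≤ B) (hfA : f ≤ A) (hfB : 0 < s → f ≤ B * s ^ (-p)) :
    f ≤ 2 ^ p * (A + B) * (1 + s) ^ (-p) := by
  rcases le_total s 1 with hs1 | hs1
  · have hfactor : 1 ≤ 2 ^ p * (1 + s) ^ (-p) := by
      rw [rpow_neg (by linarith), ← div_eq_mul_inv, one_le_div (by positivity)]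
      gcongr; linarith
    nlinarith
  · have hdecay : s ^ (-p) ≤ 2 ^ p * (1 + s) ^ (-p) :=
      calc s ^ (-p) ≤ ((1 + s) / 2) ^ (-p) :=
            rpow_le_rpow_of_nonpos (by positivity) (by linarith) (by linarith)
        _ = 2 ^ p * (1 + s) ^ (-p) := by
            rw [div_rpow (by linarith) zero_le_two, rpow_neg zero_le_two, div_inv_eq_mul, mul_comm]
    have hfactor : 0 ≤ 2 ^ p * (1 + s) ^ (-p) := by positivity
    nlinarith [hfB (by linarith)]

lemma intervalIntegrable_one_sub_rpow_mul {k : ℝ} (hk : 0 < k) {g : ℝ → ℝ}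
    (hg : Continuous g) (a b : ℝ) :
    IntervalIntegrable (fun u => (1 - u) ^ (k - 1) * g u) volume a b := by
  have h : IntervalIntegrable (fun u : ℝ => (1 - u) ^ (k - 1)) volume a b := by
    simpa using (intervalIntegrable_rpow' (a := 1 - a) (b := 1 - b) (r := k - 1)
      (by linarith)).comp_sub_left 1
  exact h.mul_continuousOn hg.continuousOn

lemma integral_one_sub_rpow_sub_one {k : ℝ} (hk : 0 < k) :
    ∫ u in (0:ℝ)..1, (1 - u) ^ (k - 1) = 1 / k := by
  rw [integral_comp_sub_left (fun v => v ^ (k - 1)), sub_self, sub_zero,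
    integral_rpow (Or.inl (by linarith)), zero_rpow (by linarith)]
  simp

lemma integral_one_add_rpow {k : ℝ} (hk : -1 < k) (δ : ℝ) :
    ∫ u in (-1:ℝ)..(-1 + δ), (1 + u) ^ k = δ ^ (k + 1) / (k + 1) := by
  simp_rw [add_comm (1:ℝ)]
  rw [integral_comp_add_right (fun v => v ^ k), integral_rpow (Or.inl hk), neg_add_cancel,
    neg_add_cancel_comm, zero_rpow (by linarith), sub_zero]

lemma integral_exp_neg_mul_one_add_le {a : ℝ} (ha : 0 < a) :
    ∫ u in (-1:ℝ)..0, exp (-(a * (1 + u))) ≤ 1 / a := by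
  have hderiv : ∀ u ∈ Set.uIcc (-1:ℝ) 0,
      HasDerivAt (fun u => -exp (-(a * (1 + u))) / a) (exp (-(a * (1 + u)))) u := by
    intro u _
    refine ((((hasDerivAt_id' u).const_add 1).const_mul a).fun_neg.exp.fun_neg.div_const a
      ).congr_deriv ?_
    field_simp
  rw [integral_eq_sub_of_hasDerivAt hderiv (Continuous.intervalIntegrable (by fun_prop) _ _)]
  calc _ = (1 - exp (-a)) / a := by norm_num; ring
    _ ≤ 1 / a := by gcongr; linarith [exp_pos (-a)]

noncomputable def antipodalIntegral (k s : ℝ) : ℝ :=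
  ∫ u in (-1:ℝ)..1, (1 - u) ^ (k - 1) * ((1 + u) ^ k * exp (-(s * (1 + u))))

lemma intervalIntegrable_antipodalIntegrand {k : ℝ} (hk : 0 < k) (s a b : ℝ) :
    IntervalIntegrable (fun u => (1 - u) ^ (k - 1) * ((1 + u) ^ k * exp (-(s * (1 + u)))))
      volume a b :=
  intervalIntegrable_one_sub_rpow_mul hk
    (((continuous_const.add continuous_id).rpow_const fun _ => Or.inr hk.le).mul
      (by fun_prop)) a b

lemma antipodalIntegrand_nonneg (k s : ℝ) {u : ℝ} (hu : u ∈ Set.Icc (-1:ℝ) 1) :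
    0 ≤ (1 - u) ^ (k - 1) * ((1 + u) ^ k * exp (-(s * (1 + u)))) := by
  have : 0 ≤ 1 - u := by linarith [hu.2]
  have : 0 ≤ 1 + u := by linarith [hu.1]
  positivity

lemma antipodalIntegral_le_antipodalIntegral_zero {k s : ℝ} (hk : 0 < k) (hs : 0 ≤ s) :
    antipodalIntegral k s ≤ antipodalIntegral k 0 := by
  refine integral_mono_on (by norm_num) (intervalIntegrable_antipodalIntegrand hk _ _ _)
    (intervalIntegrable_antipodalIntegrand hk _ _ _) fun u hu => ?_
  have : 0 ≤ 1 - u := by linarith [hu.2]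
  have : 0 ≤ 1 + u := by linarith [hu.1]
  gcongr

lemma integral_one_sub_rpow_mul_exp_le {k a : ℝ} (hk : 0 < k) (ha : 0 < a) :
    ∫ u in (-1:ℝ)..1, (1 - u) ^ (k - 1) * exp (-(a * (1 + u)))
      ≤ (max 1 (2 ^ (k - 1)) + 1 / k) / a := by
  have hint : ∀ b c : ℝ,
      IntervalIntegrable (fun u => (1 - u) ^ (k - 1) * exp (-(a * (1 + u)))) volume b c :=
    intervalIntegrable_one_sub_rpow_mul hk (by fun_prop)
  have hleft : ∫ u in (-1:ℝ)..0, (1 - u) ^ (k - 1) * exp (-(a * (1 + u)))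
      ≤ max 1 (2 ^ (k - 1)) * (1 / a) :=
    calc _ ≤ ∫ u in (-1:ℝ)..0, max 1 (2 ^ (k - 1)) * exp (-(a * (1 + u))) := by
          refine integral_mono_on (by norm_num) (hint _ _)
            (Continuous.intervalIntegrable (by fun_prop) _ _) fun u hu => ?_
          gcongr
          exact (rpow_mem_Icc_of_one_le_of_le_two (b := 1 - u) (by linarith [hu.2])
            (by linarith [hu.1])).2
      _ ≤ max 1 (2 ^ (k - 1)) * (1 / a) := by
          rw [intervalIntegral.integral_const_mul]
          gcongr
          exact integral_exp_neg_mul_one_add_le ha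
  have hright : ∫ u in (0:ℝ)..1, (1 - u) ^ (k - 1) * exp (-(a * (1 + u))) ≤ 1 / k * (1 / a) :=
    calc _ ≤ ∫ u in (0:ℝ)..1, (1 - u) ^ (k - 1) * (1 / a) := by
          refine integral_mono_on (by norm_num) (hint _ _)
            (intervalIntegrable_one_sub_rpow_mul hk continuous_const _ _) fun u hu => ?_
          have : 0 ≤ 1 - u := by linarith [hu.2]
          gcongr
          calc exp (-(a * (1 + u))) ≤ exp (-a) := exp_le_exp.2 (by nlinarith [hu.1])
            _ ≤ 1 / a := by
                rw [exp_neg, one_div]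
                exact inv_anti₀ ha (by linarith [add_one_le_exp a])
      _ = 1 / k * (1 / a) := by
          rw [intervalIntegral.integral_mul_const, integral_one_sub_rpow_sub_one hk]
  calc _ = _ + _ := (integral_add_adjacent_intervals (hint (-1) 0) (hint 0 1)).symm
    _ ≤ _ := add_le_add hleft hright
    _ = _ := by ring

lemma antipodalIntegral_le_rpow {k s : ℝ} (hk : 0 < k) (hs : 0 < s) :
    antipodalIntegral k s ≤ 2 * (2 * k) ^ k * (max 1 (2 ^ (k - 1)) + 1 / k) * s ^ (-(k + 1)) :=
  calc antipodalIntegral k s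
      ≤ ∫ u in (-1:ℝ)..1,
          (2 * k / s) ^ k * ((1 - u) ^ (k - 1) * exp (-(s / 2 * (1 + u)))) := by
        refine integral_mono_on (by norm_num) (intervalIntegrable_antipodalIntegrand hk _ _ _)
          ((intervalIntegrable_one_sub_rpow_mul hk (by fun_prop) _ _).const_mul _)
          fun u hu => ?_
        have : 0 ≤ 1 - u := by linarith [hu.2]
        calc (1 - u) ^ (k - 1) * ((1 + u) ^ k * exp (-(s * (1 + u))))
            ≤ (1 - u) ^ (k - 1) * ((2 * k / s) ^ k * exp (-(s / 2 * (1 + u)))) := by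
              gcongr (1 - u) ^ (k - 1) * ?_
              exact rpow_mul_exp_neg_mul_le hk hs (by linarith [hu.1])
          _ = _ := by ring
    _ ≤ (2 * k / s) ^ k * ((max 1 (2 ^ (k - 1)) + 1 / k) / (s / 2)) := by
        rw [intervalIntegral.integral_const_mul]
        gcongr
        exact integral_one_sub_rpow_mul_exp_le hk (by positivity)
    _ = 2 * (2 * k) ^ k * (max 1 (2 ^ (k - 1)) + 1 / k) * s ^ (-(k + 1)) := by
        rw [div_rpow (by positivity) hs.le, rpow_neg hs.le, rpow_add_one hs.ne']
        field_simp

lemma rpow_le_antipodalIntegral {k s : ℝ} (hk : 0 < k) (hs : 0 ≤ s) :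
    min 1 (2 ^ (k - 1)) * exp (-1) / (k + 1) * (1 + s) ^ (-(k + 1)) ≤ antipodalIntegral k s := by
  set δ := (1 + s)⁻¹
  have hδ : 0 < δ := by positivity
  have hδ1 : δ ≤ 1 := inv_le_one_of_one_le₀ (by linarith)
  have hsδ : s * δ ≤ 1 := by rw [← div_eq_mul_inv, div_le_one (by positivity)]; linarith
  have hint := intervalIntegrable_antipodalIntegrand hk s
  calc min 1 (2 ^ (k - 1)) * exp (-1) / (k + 1) * (1 + s) ^ (-(k + 1))
      = ∫ u in (-1:ℝ)..(-1 + δ), min 1 (2 ^ (k - 1)) * exp (-1) * (1 + u) ^ k := by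
        rw [intervalIntegral.integral_const_mul, integral_one_add_rpow (by linarith),
          inv_rpow (by positivity), ← rpow_neg (by positivity)]
        ring
    _ ≤ ∫ u in (-1:ℝ)..(-1 + δ),
          (1 - u) ^ (k - 1) * ((1 + u) ^ k * exp (-(s * (1 + u)))) := by
        refine integral_mono_on (by linarith) (Continuous.intervalIntegrable
          (continuous_const.mul ((continuous_const.add continuous_id).rpow_const
            fun _ => Or.inr hk.le)) _ _) (hint _ _) fun u hu => ?_
        have : 0 ≤ 1 + u := by linarith [hu.1]
        have : 0 ≤ 1 - u := by linarith [hu.2]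
        calc min 1 (2 ^ (k - 1)) * exp (-1) * (1 + u) ^ k
            ≤ (1 - u) ^ (k - 1) * exp (-(s * (1 + u))) * (1 + u) ^ k := by
              gcongr
              · exact (rpow_mem_Icc_of_one_le_of_le_two (b := 1 - u) (by linarith [hu.2])
                  (by linarith [hu.1])).1
              · linarith [mul_le_mul_of_nonneg_left (show 1 + u ≤ δ by linarith [hu.2]) hs]
          _ = _ := by ring
    _ ≤ antipodalIntegral k s := by
        rw [antipodalIntegral, ← integral_add_adjacent_intervals (hint (-1) (-1 + δ)) (hint _ 1)]
        exact le_add_of_nonneg_right (integral_nonneg (by linarith) fun u hu =>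
          antipodalIntegrand_nonneg k s ⟨by linarith [hu.1], hu.2⟩)

theorem antipodalIntegral_comparable {k : ℝ} (hk : 0 < k) :
    ∃ c > 0, ∃ C > 0, ∀ s ≥ 0, c * (1 + s) ^ (-(k + 1)) ≤ antipodalIntegral k s ∧
      antipodalIntegral k s ≤ C * (1 + s) ^ (-(k + 1)) := by
  have hJ0 : 0 ≤ antipodalIntegral k 0 :=
    integral_nonneg (by norm_num) fun u hu => antipodalIntegrand_nonneg k 0 hu
  refine ⟨_, by positivity, 2 ^ (k + 1) * (antipodalIntegral k 0 +
      2 * (2 * k) ^ k * (max 1 (2 ^ (k - 1)) + 1 / k)), by positivity, fun s hs =>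
    ⟨rpow_le_antipodalIntegral hk hs, le_mul_one_add_rpow_neg hs (by linarith) hJ0
      (by positivity) (antipodalIntegral_le_antipodalIntegral_zero hk hs)
      fun hs' => antipodalIntegral_le_rpow hk hs'⟩⟩

lemma dunklMeasure1_closedBall_toReal {k : ℝ} (hk : 0 ≤ k) (x r : ℝ) :
    (dunklMeasure1 k (Metric.closedBall x r)).toReal
      = ∫ y in Set.Icc (x - r) (x + r), |y| ^ (2 * k) := by
  have hint : IntegrableOn (fun y : ℝ => |y| ^ (2 * k)) (Set.Icc (x - r) (x + r)) :=
    (continuous_abs.rpow_const fun _ => Or.inr (by positivity)).integrableOn_Icc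
  rw [Real.closedBall_eq_Icc, dunklMeasure1, withDensity_apply _ measurableSet_Icc,
    ← ofReal_integral_eq_lintegral_ofReal hint (.of_forall fun y => by positivity),
    ENNReal.toReal_ofReal (setIntegral_nonneg measurableSet_Icc fun y _ => by positivity)]

lemma dunklMeasure1_closedBall_le {k : ℝ} (hk : 0 ≤ k) (x : ℝ) {r : ℝ} (hr : 0 ≤ r) :
    (dunklMeasure1 k (Metric.closedBall x r)).toReal ≤ 2 * (r * (|x| + r) ^ (2 * k)) := by
  rw [dunklMeasure1_closedBall_toReal hk]
  calc ∫ y in Set.Icc (x - r) (x + r), |y| ^ (2 * k)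
      ≤ ∫ _ in Set.Icc (x - r) (x + r), (|x| + r) ^ (2 * k) := by
        refine setIntegral_mono_on
          (continuous_abs.rpow_const fun _ => Or.inr (by positivity)).integrableOn_Icc
          (integrableOn_const measure_Icc_lt_top.ne) measurableSet_Icc fun y hy => ?_
        gcongr
        rw [abs_le]
        constructor <;> linarith [hy.1, hy.2, neg_abs_le x, le_abs_self x]
    _ = 2 * (r * (|x| + r) ^ (2 * k)) := by
        rw [setIntegral_const, Real.volume_real_Icc_of_le (by linarith), smul_eq_mul]
        ring

/-- The half of the ball farther from the origin has length `r / 2` and carries density at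
least `((|x| + r) / 2) ^ (2 * k)`. -/
lemma le_dunklMeasure1_closedBall {k : ℝ} (hk : 0 ≤ k) (x : ℝ) {r : ℝ} (hr : 0 ≤ r) :
    (2 ^ (2 * k + 1))⁻¹ * (r * (|x| + r) ^ (2 * k))
      ≤ (dunklMeasure1 k (Metric.closedBall x r)).toReal := by
  obtain ⟨a, hxa, har, hfar⟩ : ∃ a, x - r ≤ a ∧ a + r / 2 ≤ x + r ∧
      ∀ y ∈ Set.Icc a (a + r / 2), (|x| + r) / 2 ≤ |y| := by
    rcases le_total 0 x with hx | hx
    · refine ⟨x + r / 2, by linarith, by linarith, fun y hy => ?_⟩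
      rw [abs_of_nonneg hx, abs_of_nonneg (by linarith [hy.1])]
      linarith [hy.1]
    · refine ⟨x - r, by linarith, by linarith, fun y hy => ?_⟩
      rw [abs_of_nonpos hx, abs_of_nonpos (by linarith [hy.2])]
      linarith [hy.2]
  have hsub : Set.Icc a (a + r / 2) ⊆ Set.Icc (x - r) (x + r) := Set.Icc_subset_Icc hxa har
  have hint : IntegrableOn (fun y : ℝ => |y| ^ (2 * k)) (Set.Icc (x - r) (x + r)) :=
    (continuous_abs.rpow_const fun _ => Or.inr (by positivity)).integrableOn_Icc
  rw [dunklMeasure1_closedBall_toReal hk]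
  calc (2 ^ (2 * k + 1))⁻¹ * (r * (|x| + r) ^ (2 * k))
      = ∫ _ in Set.Icc a (a + r / 2), ((|x| + r) / 2) ^ (2 * k) := by
        rw [setIntegral_const, Real.volume_real_Icc_of_le (by linarith), smul_eq_mul,
          div_rpow (by positivity) zero_le_two, rpow_add_one two_ne_zero]
        field_simp
        ring
    _ ≤ ∫ y in Set.Icc a (a + r / 2), |y| ^ (2 * k) :=
        setIntegral_mono_on (integrableOn_const measure_Icc_lt_top.ne) (hint.mono_set hsub)
          measurableSet_Icc fun y hy => by gcongr; exact hfar y hy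
    _ ≤ ∫ y in Set.Icc (x - r) (x + r), |y| ^ (2 * k) :=
        setIntegral_mono_set hint (.of_forall fun y => by positivity) hsub.eventuallyLE

lemma heatH_neg_self (k : ℝ) {t : ℝ} (ht : 0 ≤ t) (x : ℝ) :
    heatH k t x (-x) = ((2:ℝ) ^ (2 * k + 1) * Gamma (k + 1/2))⁻¹ *
      (Gamma (k + 1/2) / (Gamma k * Gamma (1/2))) * t ^ (-k - 1/2) *
      antipodalIntegral k (x ^ 2 / (2 * t)) := by
  have hprod : x / √(2 * t) * (-x / √(2 * t)) = -(x ^ 2 / (2 * t)) := by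
    rw [div_mul_div_comm, mul_self_sqrt (by linarith)]; ring
  have hintegrand : ∀ u : ℝ,
      (1 - u) ^ (k - 1) * ((1 + u) ^ k * exp (-(x ^ 2 / (2 * t) * (1 + u))))
      = exp (-(x ^ 2 + (-x) ^ 2) / (4 * t)) *
        ((1 - u) ^ (k - 1) * (1 + u) ^ k * exp (-(x ^ 2 / (2 * t)) * u)) := by
    intro u
    rw [show -(x ^ 2 / (2 * t) * (1 + u))
        = -(x ^ 2 + (-x) ^ 2) / (4 * t) + -(x ^ 2 / (2 * t)) * u by ring, exp_add]
    ring
  simp only [heatH, dunklE, antipodalIntegral, hprod, hintegrand,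
    intervalIntegral.integral_const_mul]
  ring

lemma one_add_rpow_mul_mem_Icc {k σ : ℝ} (hk : 0 ≤ k) (hσ : 0 ≤ σ) :
    (1 + σ) ^ (2 * k) * (1 + σ ^ 2 / 2) ^ (-(k + 1)) * (1 + σ ^ 2)
      ∈ Set.Icc 1 (2 ^ (2 * k + 1)) := by
  set q := 1 + σ ^ 2
  have hq : 0 < q := by positivity
  have hcancel : q ^ k * q ^ (-(k + 1)) * q = 1 := by
    rw [← rpow_add hq, ← rpow_add_one hq.ne', show k + -(k + 1) + 1 = 0 by ring, rpow_zero]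
  have hsq : (1 + σ) ^ (2 * k) = ((1 + σ) ^ 2) ^ k := by
    rw [← rpow_natCast, ← rpow_mul (by positivity)]; norm_num
  rw [hsq]
  constructor
  · have hsq_le : q ^ k ≤ ((1 + σ) ^ 2) ^ k := by gcongr; nlinarith
    have hhalf_le : q ^ (-(k + 1)) ≤ (1 + σ ^ 2 / 2) ^ (-(k + 1)) :=
      rpow_le_rpow_of_nonpos (by positivity) (by linarith [sq_nonneg σ]) (by linarith)
    calc (1:ℝ) = q ^ k * q ^ (-(k + 1)) * q := hcancel.symm
      _ ≤ ((1 + σ) ^ 2) ^ k * (1 + σ ^ 2 / 2) ^ (-(k + 1)) * q := by gcongr ?_ * ?_ * _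
  · have hsq_le : ((1 + σ) ^ 2) ^ k ≤ (2 * q) ^ k := by gcongr; nlinarith [sq_nonneg (1 - σ)]
    have hhalf_le : (1 + σ ^ 2 / 2) ^ (-(k + 1)) ≤ (q / 2) ^ (-(k + 1)) :=
      rpow_le_rpow_of_nonpos (by positivity) (by linarith) (by linarith)
    calc ((1 + σ) ^ 2) ^ k * (1 + σ ^ 2 / 2) ^ (-(k + 1)) * q
        ≤ (2 * q) ^ k * (q / 2) ^ (-(k + 1)) * q := by gcongr ?_ * ?_ * _
      _ = 2 ^ k * 2 ^ (k + 1) * (q ^ k * q ^ (-(k + 1)) * q) := by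
          rw [mul_rpow zero_le_two hq.le, div_rpow hq.le zero_le_two, rpow_neg zero_le_two]
          field_simp
      _ = 2 ^ (2 * k + 1) := by rw [hcancel, mul_one, ← rpow_add two_pos]; ring_nf

lemma heatScale_mem_Icc {k t : ℝ} (hk : 0 ≤ k) (ht : 0 < t) (x : ℝ) :
    t ^ (-k - 1/2) * (1 + x ^ 2 / (2 * t)) ^ (-(k + 1)) * (√t * (|x| + √t) ^ (2 * k)) *
      ((t + x ^ 2) / t) ∈ Set.Icc 1 (2 ^ (2 * k + 1)) := by
  have hr : 0 < √t := sqrt_pos.2 ht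
  have hσ : 0 ≤ |x| / √t := by positivity
  have hvol : t ^ (-k - 1/2) * (√t * (|x| + √t) ^ (2 * k)) = (1 + |x| / √t) ^ (2 * k) := by
    have hpow : t ^ (-k - 1/2) = √t ^ (-(2 * k) - 1) := by
      rw [sqrt_eq_rpow, ← rpow_mul ht.le]; ring_nf
    rw [hpow, ← mul_assoc, ← rpow_add_one hr.ne', sub_add_cancel, rpow_neg hr.le,
      one_add_div hr.ne', div_rpow (by positivity) hr.le, add_comm √t, inv_mul_eq_div]
  have hs : x ^ 2 / (2 * t) = (|x| / √t) ^ 2 / 2 := by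
    rw [div_pow, sq_abs, sq_sqrt ht.le]; ring
  have hq : (t + x ^ 2) / t = 1 + (|x| / √t) ^ 2 := by
    rw [div_pow, sq_abs, sq_sqrt ht.le]; field_simp
  convert one_add_rpow_mul_mem_Icc hk hσ using 1
  rw [hs, hq, ← hvol]
  ring

theorem heatH_antipodal_decay (k : ℝ) (hk : 0 < k) :
    ∃ c > (0:ℝ), ∃ C > (0:ℝ), ∀ t > (0:ℝ), ∀ x : ℝ,
      c ≤ heatH k t x (-x) *
            (dunklMeasure1 k (Metric.closedBall x (Real.sqrt t))).toReal *
            ((t + x ^ 2) / t) ∧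
      heatH k t x (-x) *
          (dunklMeasure1 k (Metric.closedBall x (Real.sqrt t))).toReal *
          ((t + x ^ 2) / t) ≤ C := by
  obtain ⟨c, hc, C, hC, hJ⟩ := antipodalIntegral_comparable hk
  set K := ((2:ℝ) ^ (2 * k + 1) * Gamma (k + 1/2))⁻¹ *
    (Gamma (k + 1/2) / (Gamma k * Gamma (1/2)))
  have hK : 0 < K := by
    have := Gamma_pos_of_pos hk
    have := Gamma_pos_of_pos (show 0 < k + 1/2 by linarith)
    have := Gamma_pos_of_pos (show (0:ℝ) < 1/2 by norm_num)
    positivity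
  refine ⟨K * c * (2 ^ (2 * k + 1))⁻¹, by positivity, K * C * 2 * 2 ^ (2 * k + 1),
    by positivity, fun t ht x => ?_⟩
  set s := x ^ 2 / (2 * t)
  set V := √t * (|x| + √t) ^ (2 * k)
  set q := (t + x ^ 2) / t
  set P := t ^ (-k - 1/2) * (1 + s) ^ (-(k + 1)) * V * q with hP
  obtain ⟨hJlo, hJhi⟩ := hJ s (by positivity)
  have hJ0 : 0 ≤ antipodalIntegral k s := le_trans (by positivity) hJlo
  obtain ⟨hPlo, hPhi⟩ : P ∈ Set.Icc 1 (2 ^ (2 * k + 1)) := heatScale_mem_Icc hk.le ht x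
  have hμlo := le_dunklMeasure1_closedBall hk.le x (sqrt_nonneg t)
  have hμhi := dunklMeasure1_closedBall_le hk.le x (sqrt_nonneg t)
  rw [heatH_neg_self k ht.le x]
  constructor
  · calc K * c * (2 ^ (2 * k + 1))⁻¹
        ≤ K * c * (2 ^ (2 * k + 1))⁻¹ * P := le_mul_of_one_le_right (by positivity) hPlo
      _ = K * t ^ (-k - 1/2) * (c * (1 + s) ^ (-(k + 1))) * ((2 ^ (2 * k + 1))⁻¹ * V) * q := by
          rw [hP]; ring
      _ ≤ _ := by gcongr
  · calc _ ≤ K * t ^ (-k - 1/2) * (C * (1 + s) ^ (-(k + 1))) * (2 * V) * q := by gcongr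
      _ = K * C * 2 * P := by rw [hP]; ring
      _ ≤ K * C * 2 * 2 ^ (2 * k + 1) := by gcongr
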